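/- Assume moreover that $K$ has characteristic different from $2$, and suppose $\sigma$ is a $K$-algebra endomorphism of $L$ such that $\sigma(y_n) = \frac{P_{n-2}}{P_{n-1}} \cdot \frac{F_{n-1}}{y_{n-1}}$ for all $n \in \mathbb{Z}/m\mathbb{Z}$. Let $\mathcal{Z}$ be the subfield of $L$ generated by $K$ and the elements $z_n$, $n \in \mathbb{Z}/m\mathbb{Z}$. Then the fixed field $\{f \in L : \sigma(f) = f\}$ equals $\mathcal{Z}$, and the field extension degree $[L : \mathcal{Z}]$ equals $2$. -/

import Mathlib

/-!
The cyclic recurrence `P_n = 1 + X_n P_{n-1} - ∏ X` gives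
`P_n + X_{n-1} P_{n-2} = (1 + X_n) P_{n-1}`, which is exactly `σ(z_n) = z_n`.
The partial products `y_n y_{n-1} ⋯ y_{n-k+1}` obey the continuant recurrence
`Q_{k+2} = z Q_{k+1} - F Q_k`, so `𝐲 = ∏ y_n` is `𝒵`-affine in each `y_n`. Since
`σ(𝐲) = 𝐅/𝐲 ≠ 𝐲`, the coefficient of `y_n` is nonzero, so `L = 𝒵(𝐲)`, and `z_0 y_1 = y_0 y_1 + F_0`
makes `𝐲` a root of a monic quadratic over `𝒵`. As `𝐲 ∉ 𝒵`, `[L : 𝒵] = 2`; the fixed points of `σ`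
form a proper `𝒵`-subalgebra of this prime-degree extension, hence are `𝒵`.
-/

/- Setting: `Lm K m` is the field of fractions of the (Laurent) polynomial ring over a field
`K` in commuting variables `yv n` indexed by `n : ZMod m`, with fixed scalars `F n : K`. -/

noncomputable section

variable (K : Type) [Field K] (m : ℕ) [NeZero m]

/-- The ambient field `L`. -/
abbrev Lm := FractionRing (MvPolynomial (ZMod m) K)

/-- The variable `y_n`. -/
def yv (n : ZMod m) : Lm K m :=
  algebraMap (MvPolynomial (ZMod m) K) (Lm K m) (MvPolynomial.X n)

variable (F : ZMod m → K)

/-- The scalar `F_n` viewed inside `L`. -/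
def Fc (n : ZMod m) : Lm K m := algebraMap K (Lm K m) (F n)

/-- `X_n = F_n / (y_n y_{n+1})`. -/
def Xv (n : ZMod m) : Lm K m := Fc K m F n / (yv K m n * yv K m (n + 1))

/-- `P_n = 1 + ∑_{k=0}^{m-2} X_n X_{n-1} ⋯ X_{n-k}`. -/
def Pv (n : ZMod m) : Lm K m :=
  1 + ∑ k ∈ Finset.range (m - 1), ∏ j ∈ Finset.range (k + 1), Xv K m F (n - (j : ZMod m))

/-- `z_n = y_n (1 + X_n)`. -/
def zv (n : ZMod m) : Lm K m := yv K m n * (1 + Xv K m F n)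

/-- `𝐲 = ∏_n y_n`. -/
def boldy : Lm K m := ∏ n : ZMod m, yv K m n

/-- `𝐅 = ∏_n F_n` (viewed in `L`). -/
def boldF : Lm K m := ∏ n : ZMod m, Fc K m F n

/-- `δ = 𝐲 - 𝐅/𝐲`. -/
def deltav : Lm K m := boldy K m - boldF K m F / boldy K m

section FieldTheory

variable {k E : Type*} [Field k] [Field E] [Algebra k E]

open Polynomial IntermediateField in
theorem finrank_eq_two_of_adjoin_eq_top {x : E} (htop : k⟮x⟯ = ⊤)
    (hx : x ∉ Set.range (algebraMap k E)) (s t : k)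
    (hquad : x * x = algebraMap k E s * x + algebraMap k E t) : Module.finrank k E = 2 := by
  set p : k[X] := X ^ 2 - C s * X - C t
  have hp : p.Monic := by unfold p; monicity!
  have hpx : aeval x p = 0 := by simp [p, sq, hquad]
  have hint : IsIntegral k x := ⟨p, hp, hpx⟩
  have hle : (minpoly k x).natDegree ≤ 2 := by
    refine (natDegree_le_of_dvd (minpoly.dvd k x hpx) hp.ne_zero).trans ?_
    unfold p; compute_degree
  rw [← finrank_top', ← htop, adjoin.finrank hint]
  have := (minpoly.two_le_natDegree_iff hint).mpr hx
  omega

theorem AlgHom.mem_range_algebraMap_of_fixed (h2 : Module.finrank k E = 2) (σ : E →ₐ[k] E)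
    {x : E} (hx : σ x ≠ x) {f : E} (hf : σ f = f) : f ∈ Set.range (algebraMap k E) := by
  have := Subalgebra.isSimpleOrder_of_finrank_prime k E (h2 ▸ Nat.prime_two)
  have hf' : f ∈ AlgHom.equalizer σ (AlgHom.id k E) := hf
  rcases eq_bot_or_eq_top (AlgHom.equalizer σ (AlgHom.id k E)) with h | h
  · rwa [h, Algebra.mem_bot] at hf'
  · exact absurd (h ▸ Algebra.mem_top : x ∈ AlgHom.equalizer σ (AlgHom.id k E)) hx

end FieldTheory

open Finset

variable {K m F}

theorem prod_range_sub_natCast {M : Type*} [CommMonoid M] (g : ZMod m → M) (n : ZMod m) :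
    ∏ j ∈ range m, g (n - j) = ∏ i, g i := by
  rw [← Fintype.prod_equiv (Equiv.subLeft n) (fun i => g (n - i)) g (fun _ => rfl)]
  refine prod_nbij' (fun j => (j : ZMod m)) ZMod.val (fun _ _ => mem_univ _)
    (fun i _ => mem_range.mpr (ZMod.val_lt i))
    (fun j hj => ZMod.val_natCast_of_lt (mem_range.mp hj))
    (fun i _ => ZMod.natCast_zmod_val i) (fun _ _ => rfl)

omit [NeZero m] in
theorem adjoin_range_yv : IntermediateField.adjoin K (Set.range (yv K m)) = ⊤ := by
  rw [← IsFractionRing.algHom_fieldRange_eq_of_comp_eq_of_range_eq (f := AlgHom.id K (Lm K m))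
    (g := IsScalarTower.toAlgHom K (MvPolynomial (ZMod m) K) (Lm K m)) (by ext <;> rfl)]
  · exact AlgHom.fieldRange_eq_top.mpr Function.surjective_id
  · rw [← Algebra.map_top, ← MvPolynomial.adjoin_range_X, AlgHom.map_adjoin, ← Set.range_comp]
    rfl

omit [NeZero m] in
theorem yv_ne_zero (n : ZMod m) : yv K m n ≠ 0 :=
  (map_ne_zero_iff _ (IsFractionRing.injective _ _)).mpr (MvPolynomial.X_ne_zero n)

omit [NeZero m] in
theorem zv_eq (n : ZMod m) : zv K m F n = yv K m n + Fc K m F n / yv K m (n + 1) := by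
  have := yv_ne_zero (K := K) n
  have := yv_ne_zero (K := K) (n + 1)
  rw [zv, Xv]
  field_simp

theorem Pv_eq_sum (n : ZMod m) :
    Pv K m F n = ∑ k ∈ range m, ∏ j ∈ range k, Xv K m F (n - j) := by
  obtain ⟨k, rfl⟩ : ∃ k, m = k + 1 := Nat.exists_eq_add_one.mpr (NeZero.pos m)
  rw [sum_range_succ', Pv, add_tsub_cancel_right, prod_range_zero]
  exact add_comm _ _

theorem Pv_add_prod_Xv (n : ZMod m) :
    Pv K m F n + ∏ c, Xv K m F c = 1 + Xv K m F n * Pv K m F (n - 1) := by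
  calc Pv K m F n + ∏ c, Xv K m F c = ∑ k ∈ range (m + 1), ∏ j ∈ range k, Xv K m F (n - j) := by
        rw [sum_range_succ, Pv_eq_sum, prod_range_sub_natCast]
    _ = 1 + Xv K m F n * Pv K m F (n - 1) := by
        simp only [sum_range_succ', prod_range_succ', Pv_eq_sum, mul_sum]
        simp [mul_comm, sub_sub, add_comm]

theorem Pv_add_Xv_mul (n : ZMod m) :
    Pv K m F n + Xv K m F (n - 1) * Pv K m F (n - 2) = (1 + Xv K m F n) * Pv K m F (n - 1) := by
  have h₁ := Pv_add_prod_Xv (F := F) n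
  have h₂ := Pv_add_prod_Xv (F := F) (n - 1)
  rw [sub_sub, one_add_one_eq_two] at h₂
  linear_combination h₁ - h₂

omit [NeZero m] in
theorem prod_range_add_two_yv (n : ZMod m) (k : ℕ) :
    ∏ j ∈ range (k + 2), yv K m (n - j) =
      zv K m F (n - (k + 1 : ℕ)) * ∏ j ∈ range (k + 1), yv K m (n - j) -
        Fc K m F (n - (k + 1 : ℕ)) * ∏ j ∈ range k, yv K m (n - j) := by
  have := yv_ne_zero (K := K) (n - (k : ZMod m))
  rw [prod_range_succ, prod_range_succ (n := k), zv_eq,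
    show n - (k + 1 : ℕ) + 1 = n - k by push_cast; ring]
  field_simp
  ring

theorem boldy_mem_span (Z : IntermediateField K (Lm K m)) (hz : ∀ n, zv K m F n ∈ Z) (n : ZMod m) :
    boldy K m ∈ Submodule.span Z ({1, yv K m n} : Set (Lm K m)) := by
  have hprod (k : ℕ) :
      ∏ j ∈ range k, yv K m (n - j) ∈ Submodule.span Z ({1, yv K m n} : Set (Lm K m)) := by
    induction k using Nat.twoStepInduction with
    | zero => exact Submodule.subset_span (Set.mem_insert _ _)
    | one =>
      rw [prod_range_one, Nat.cast_zero, sub_zero]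
      exact Submodule.subset_span (Set.mem_insert_of_mem _ rfl)
    | more k h₀ h₁ =>
      rw [prod_range_add_two_yv (F := F)]
      exact sub_mem (Submodule.smul_mem _ (⟨_, hz _⟩ : Z) h₁)
        (Submodule.smul_mem _ (⟨_, Z.algebraMap_mem (F _)⟩ : Z) h₀)
  rw [boldy, ← prod_range_sub_natCast (yv K m) n]
  exact hprod m

theorem boldy_mul_self_ne : boldy K m * boldy K m ≠ boldF K m F := by
  set A := MvPolynomial (ZMod m) K
  have hy : boldy K m = algebraMap A (Lm K m) (∏ n, MvPolynomial.X n) := by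
    rw [boldy, map_prod]; rfl
  have hF : boldF K m F = algebraMap A (Lm K m) (MvPolynomial.C (∏ n, F n)) := by
    rw [boldF, map_prod, map_prod]; rfl
  intro h
  have hA : (∏ n, MvPolynomial.X n) * (∏ n, MvPolynomial.X n) = (MvPolynomial.C (∏ n, F n) : A) :=
    IsFractionRing.injective A (Lm K m) (by rw [map_mul, ← hy, ← hF, h])
  have hprod : ∏ n, F n = 0 := by
    simpa [map_prod, zero_pow (NeZero.ne m)] using (congrArg MvPolynomial.constantCoeff hA).symm
  rw [hprod, map_zero, mul_self_eq_zero] at hA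
  exact (prod_ne_zero_iff.mpr fun n _ => MvPolynomial.X_ne_zero n) hA

theorem boldy_ne_zero : boldy K m ≠ 0 :=
  prod_ne_zero_iff.mpr fun n _ => yv_ne_zero n

section Dynamics

variable {σ : Lm K m →ₐ[K] Lm K m}
  (hσ : ∀ n : ZMod m,
    σ (yv K m n) = Pv K m F (n - 2) / Pv K m F (n - 1) * (Fc K m F (n - 1) / yv K m (n - 1)))
include hσ

local notation "𝒵" => IntermediateField.adjoin K (Set.range (zv K m F))

omit [NeZero m] in
theorem Pv_ne_zero (n : ZMod m) : Pv K m F n ≠ 0 := by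
  have h := (map_ne_zero σ).mpr (yv_ne_zero (n + 2))
  simp only [hσ, add_sub_cancel_right, mul_ne_zero_iff, div_ne_zero_iff] at h
  exact h.1.1

omit [NeZero m] in
theorem Fc_ne_zero (n : ZMod m) : Fc K m F n ≠ 0 := by
  have h := (map_ne_zero σ).mpr (yv_ne_zero (n + 1))
  simp only [hσ, add_sub_cancel_right, mul_ne_zero_iff, div_ne_zero_iff] at h
  exact h.2.1

theorem map_zv (n : ZMod m) : σ (zv K m F n) = zv K m F n := by
  have := yv_ne_zero (K := K) (n - 1)
  have := yv_ne_zero (K := K) n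
  have := yv_ne_zero (K := K) (n + 1)
  have := Pv_ne_zero hσ (n - 1)
  have := Pv_ne_zero hσ n
  have := Fc_ne_zero hσ n
  have key := Pv_add_Xv_mul (F := F) n
  rw [Xv, Xv, sub_add_cancel] at key
  rw [zv_eq, map_add, map_div₀, Fc, σ.commutes, ← Fc, hσ, hσ, add_sub_cancel_right,
    show n + 1 - 2 = n - 1 by ring]
  field_simp at key ⊢
  linear_combination key

theorem map_eq_self_of_mem_adjoin_zv {f : Lm K m} (hf : f ∈ 𝒵) : σ f = f := by
  have h : σ.comp (𝒵).val = (𝒵).val :=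
    IntermediateField.adjoin_algHom_ext K fun _ ⟨n, hn⟩ => hn ▸ map_zv hσ n
  exact DFunLike.congr_fun h ⟨f, hf⟩

theorem map_boldy : σ (boldy K m) = boldF K m F / boldy K m := by
  rw [boldy, map_prod, prod_congr rfl fun n _ => hσ n, prod_mul_distrib, prod_div_distrib,
    prod_div_distrib,
    Fintype.prod_equiv (Equiv.subRight 2) (fun n => Pv K m F (n - 2)) (Pv K m F) fun _ => rfl,
    Fintype.prod_equiv (Equiv.subRight 1) (fun n => Pv K m F (n - 1)) (Pv K m F) fun _ => rfl,
    Fintype.prod_equiv (Equiv.subRight 1) (fun n => Fc K m F (n - 1)) (Fc K m F) fun _ => rfl,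
    Fintype.prod_equiv (Equiv.subRight 1) (fun n => yv K m (n - 1)) (yv K m) fun _ => rfl,
    div_self (prod_ne_zero_iff.mpr fun n _ => Pv_ne_zero hσ n), one_mul]
  rfl

theorem map_boldy_ne_self : σ (boldy K m) ≠ boldy K m := by
  rw [map_boldy hσ, Ne, div_eq_iff boldy_ne_zero, eq_comm]
  exact boldy_mul_self_ne

theorem exists_boldy_eq_mul_add (n : ZMod m) :
    ∃ a b, a ∈ 𝒵 ∧ b ∈ 𝒵 ∧ a ≠ 0 ∧ boldy K m = a * yv K m n + b := by
  obtain ⟨b, a, hab⟩ := Submodule.mem_span_pair.mp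
    (boldy_mem_span (F := F) 𝒵 (fun n => IntermediateField.subset_adjoin K _ ⟨n, rfl⟩) n)
  simp only [Algebra.smul_def, mul_one, IntermediateField.algebraMap_apply] at hab
  refine ⟨a, b, a.2, b.2, fun ha => map_boldy_ne_self hσ ?_, by rw [← hab]; ring⟩
  rw [← hab, ha, zero_mul, add_zero]
  exact map_eq_self_of_mem_adjoin_zv hσ b.2

theorem adjoin_boldy_eq_top : IntermediateField.adjoin 𝒵 {boldy K m} = ⊤ := by
  rw [← IntermediateField.restrictScalars_eq_top_iff (K := K), eq_top_iff, ← adjoin_range_yv,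
    IntermediateField.adjoin_le_iff]
  rintro _ ⟨n, rfl⟩
  obtain ⟨a, b, ha, hb, ha₀, h⟩ := exists_boldy_eq_mul_add hσ n
  have hy : yv K m n = (boldy K m - b) / a := by rw [h]; field_simp; ring
  have hsub (c : Lm K m) (hc : c ∈ 𝒵) : c ∈ IntermediateField.adjoin 𝒵 {boldy K m} :=
    IntermediateField.algebraMap_mem _ (⟨c, hc⟩ : 𝒵)
  rw [SetLike.mem_coe, IntermediateField.mem_restrictScalars, hy]
  exact div_mem (sub_mem (IntermediateField.mem_adjoin_simple_self _ _) (hsub b hb)) (hsub a ha)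

theorem exists_boldy_mul_self_eq : ∃ s t : 𝒵,
    boldy K m * boldy K m = algebraMap 𝒵 (Lm K m) s * boldy K m + algebraMap 𝒵 (Lm K m) t := by
  have hz : zv K m F 0 ∈ 𝒵 := IntermediateField.subset_adjoin K _ ⟨0, rfl⟩
  have hF : Fc K m F 0 ∈ 𝒵 := IntermediateField.algebraMap_mem _ (F 0)
  obtain ⟨a₀, b₀, ha₀, hb₀, -, h₀⟩ := exists_boldy_eq_mul_add hσ 0
  obtain ⟨a₁, b₁, ha₁, hb₁, -, h₁⟩ := exists_boldy_eq_mul_add hσ 1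
  have hz₀ : zv K m F 0 * yv K m 1 = yv K m 0 * yv K m 1 + Fc K m F 0 := by
    have := yv_ne_zero (K := K) (m := m) 1
    rw [zv_eq, zero_add]
    field_simp
  refine ⟨⟨_, add_mem (add_mem (mul_mem ha₀ hz) hb₀) hb₁⟩,
    ⟨_, neg_mem (add_mem (add_mem (mul_mem (mul_mem ha₀ hz) hb₁) (mul_mem hb₀ hb₁))
      (mul_mem (mul_mem ha₀ ha₁) hF))⟩, ?_⟩
  simp only [IntermediateField.algebraMap_apply]
  -- multiply `z₀ y₁ = y₀ y₁ + F₀` by `a₀ a₁` and substitute `aᵢ yᵢ = 𝐲 - bᵢ`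
  linear_combination (boldy K m - b₁) * h₀ + a₀ * (yv K m 0 - zv K m F 0) * h₁ - a₀ * a₁ * hz₀

theorem finrank_adjoin_zv : Module.finrank 𝒵 (Lm K m) = 2 := by
  obtain ⟨s, t, hst⟩ := exists_boldy_mul_self_eq hσ
  refine finrank_eq_two_of_adjoin_eq_top (adjoin_boldy_eq_top hσ) ?_ s t hst
  rintro ⟨a, ha⟩
  exact map_boldy_ne_self hσ (ha ▸ map_eq_self_of_mem_adjoin_zv hσ a.2)

end Dynamics

theorem stmt_7_general (σ : Lm K m →ₐ[K] Lm K m)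
    (hσ : ∀ n : ZMod m,
      σ (yv K m n) = Pv K m F (n - 2) / Pv K m F (n - 1) * (Fc K m F (n - 1) / yv K m (n - 1))) :
    {f : Lm K m | σ f = f} = (IntermediateField.adjoin K (Set.range (zv K m F)) : Set (Lm K m)) ∧
      Module.finrank (IntermediateField.adjoin K (Set.range (zv K m F))) (Lm K m) = 2 := by
  set 𝒵 := IntermediateField.adjoin K (Set.range (zv K m F))
  refine ⟨Set.ext fun f => ⟨fun hf => ?_, map_eq_self_of_mem_adjoin_zv hσ⟩, finrank_adjoin_zv hσ⟩
  let σ𝒵 : Lm K m →ₐ[𝒵] Lm K m :=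
    { σ with commutes' := fun a => map_eq_self_of_mem_adjoin_zv hσ a.2 }
  obtain ⟨a, rfl⟩ :=
    σ𝒵.mem_range_algebraMap_of_fixed (finrank_adjoin_zv hσ) (map_boldy_ne_self hσ) hf
  exact a.2

/-- if `char K ≠ 2` and `σ` is a `K`-algebra endomorphism of `L` with
`σ(y_n) = (P_{n-2}/P_{n-1})·(F_{n-1}/y_{n-1})` for all `n`, then the fixed field of `σ` equals the
subfield `𝒵` generated by `K` and the `z_n`, and `[L : 𝒵] = 2`. -/
theorem stmt_7 (hm : 2 ≤ m) (hF : ∀ n, F n ≠ 0) (hchar : ringChar K ≠ 2)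
    (σ : Lm K m →ₐ[K] Lm K m)
    (hσ : ∀ n : ZMod m,
      σ (yv K m n) = Pv K m F (n - 2) / Pv K m F (n - 1) * (Fc K m F (n - 1) / yv K m (n - 1))) :
    {f : Lm K m | σ f = f} = (IntermediateField.adjoin K (Set.range (zv K m F)) : Set (Lm K m)) ∧
      Module.finrank (IntermediateField.adjoin K (Set.range (zv K m F))) (Lm K m) = 2 :=
  stmt_7_general σ hσ
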